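/- arXiv:1706.06425 — 4 statements merged into one kernel-verified Lean document; each statement's English description precedes it below -/
import Mathlib

section
/- Let n be even, let k be a positive divisor of n/2, and define the matrix entries t_{2i-1,j} = n - (2k(i-1) + (j-1)) and t_{2i,j} = n - 2ki + j for 1 ≤ i ≤ n/(2k), 1 ≤ j ≤ k. Then for each fixed j, the column sum ∑_{i=1}^{n/k} t_{i,j} equals n(n+1)/(2k). -/
theorem stmt_9 (n k : ℕ) (hn : 0 < n) (he : Even n) (hk : 0 < k) (hdvd : k ∣ n / 2) :
    ∀ j, 1 ≤ j → j ≤ k →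
      ∑ i ∈ Finset.Icc 1 (n / (2 * k)),
        ((n - (2 * k * (i - 1) + (j - 1))) + (n - 2 * k * i + j)) = n * (n + 1) / (2 * k) := by
  intro j hj1 hjk
  obtain ⟨m, hm⟩ : 2 * k ∣ n := by
    obtain ⟨c, hc⟩ := hdvd
    obtain ⟨d, hd⟩ := he
    exact ⟨c, by rw [show 2 * k * c = 2 * (k * c) by ring, ← hc]; omega⟩
  have hmm : n / (2 * k) = m := by
    rw [hm, Nat.mul_div_cancel_left _ (by omega)]
  rw [hmm]
  have key : ∑ i ∈ Finset.Icc 1 m, ((n - (2 * k * (i - 1) + (j - 1))) + (n - 2 * k * i + j))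
      = ∑ i ∈ Finset.Icc 1 m, (4 * k * (m - i) + (2 * k + 1)) := by
    apply Finset.sum_congr rfl
    intro i hi
    rw [Finset.mem_Icc] at hi
    obtain ⟨d, hd⟩ : ∃ d, m = i + d := ⟨m - i, by omega⟩
    obtain ⟨a, ha⟩ : ∃ a, i = a + 1 := ⟨i - 1, by omega⟩
    subst hd ha hm
    have e1 : 2 * k * ((a + 1) + d) = 2 * (k * a) + 2 * k + 2 * (k * d) := by ring
    have e2 : 2 * k * ((a + 1) - 1) = 2 * (k * a) := by simp; ring
    have e3 : 2 * k * (a + 1) = 2 * (k * a) + 2 * k := by ring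
    have e4 : 4 * k * ((a + 1) + d - (a + 1)) = 4 * (k * d) := by simp; ring
    rw [e1, e2, e3, e4]
    generalize k * a = x
    generalize k * d = y
    omega
  rw [key, Finset.sum_add_distrib, Finset.sum_const, Nat.card_Icc, ← Finset.mul_sum]
  have hS : ∑ i ∈ Finset.Icc 1 m, (m - i) = ∑ i ∈ Finset.range m, i := by
    apply Finset.sum_nbij' (i := fun i => m - i) (j := fun j => m - j) <;>
      intro a ha <;> simp only [Finset.mem_Icc, Finset.mem_range] at * <;> omega
  rw [hS]
  have hG : (∑ i ∈ Finset.range m, i) * 2 = m * (m - 1) := Finset.sum_range_id_mul_two m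
  have hrhs : n * (n + 1) / (2 * k) = m * (2 * k * m + 1) := by
    rw [hm, show 2 * k * m * (2 * k * m + 1) = 2 * k * (m * (2 * k * m + 1)) by ring,
      Nat.mul_div_cancel_left _ (by omega : 0 < 2 * k)]
  rw [hrhs]
  have h4 : 4 * k * (∑ i ∈ Finset.range m, i) = 2 * k * (m * (m - 1)) := by
    rw [← hG]; ring
  rw [h4]
  rcases m with _ | m'
  · simp
  · simp only [Nat.add_sub_cancel, Nat.succ_sub_one]
    ring
end

section
/- Let n be even and let k be a positive divisor of n/2, and set t = n(n+1)/(2k). Then the sets T_j = { n - (2k(i-1) + (j-1)) : 1 ≤ i ≤ n/(2k) } ∪ { n - 2ki + j : 1 ≤ i ≤ n/(2k) } for 1 ≤ j ≤ k form a (k, t)-partitioning of {1, ..., n}: they are pairwise disjoint, their union is {1,...,n}, each has exactly n/k elements, and each sums to t. -/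
lemma keyA (k m i j : ℕ) (hi1 : 1 ≤ i) (him : i ≤ m) (hj1 : 1 ≤ j) (hjk : j ≤ k) :
    2*k*m - (2*k*(i-1) + (j-1)) = 2*k*(m-i) + (2*k+1-j) := by
  have h1 : 2*k*(i-1) + 2*k*(m-i) + 2*k = 2*k*m := by
    rw [← Nat.mul_add, ← Nat.mul_succ]
    congr 1
    omega
  omega

lemma keyB (k m i j : ℕ) (him : i ≤ m) :
    2*k*m - 2*k*i + j = 2*k*(m-i) + j := by
  have h1 : 2*k*i + 2*k*(m-i) = 2*k*m := by rw [← Nat.mul_add]; congr 1; omega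
  omega

lemma memS {k m c x : ℕ} (hk : 0 < k) (hc1 : 1 ≤ c) (hc2 : c ≤ 2*k) :
    x ∈ (Finset.range m).image (fun a => 2*k*a + c) ↔
      1 ≤ x ∧ x ≤ 2*k*m ∧ (x-1) % (2*k) = c - 1 := by
  have hk2 : 0 < 2*k := by omega
  simp only [Finset.mem_image, Finset.mem_range]
  constructor
  · rintro ⟨a, ha, rfl⟩
    have hle : 2*k*(a+1) ≤ 2*k*m := Nat.mul_le_mul_left _ (by omega)
    have hle' : 2*k*(a+1) = 2*k*a + 2*k := by ring
    refine ⟨by omega, by omega, ?_⟩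
    have : 2*k*a + c - 1 = 2*k*a + (c-1) := by omega
    rw [this, Nat.mul_add_mod, Nat.mod_eq_of_lt (by omega)]
  · rintro ⟨h1, h2, h3⟩
    refine ⟨(x-1)/(2*k), ?_, ?_⟩
    · rw [Nat.div_lt_iff_lt_mul hk2]
      have : 2*k*m = m*(2*k) := by ring
      omega
    · have := Nat.div_add_mod (x-1) (2*k)
      omega

lemma cardS {k m c : ℕ} (hk : 0 < k) :
    ((Finset.range m).image (fun a => 2*k*a + c)).card = m := by
  rw [Finset.card_image_of_injective _ ?_, Finset.card_range]
  intro a b h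
  simp only at h
  exact Nat.eq_of_mul_eq_mul_left (show 0 < 2*k by omega) (show 2*k*a = 2*k*b by omega)

lemma sumS {k m c : ℕ} (hk : 0 < k) :
    ∑ x ∈ (Finset.range m).image (fun a => 2*k*a + c), x = k*m*(m-1) + m*c := by
  rw [Finset.sum_image (fun a _ b _ h => by
    exact Nat.eq_of_mul_eq_mul_left (show 0 < 2*k by omega) (show 2*k*a = 2*k*b by omega))]
  rw [Finset.sum_add_distrib, Finset.sum_const, Finset.card_range, ← Finset.mul_sum]
  have h := Finset.sum_range_id_mul_two m
  have e : 2*k*(∑ i ∈ Finset.range m, i) = k*((∑ i ∈ Finset.range m, i)*2) := by ring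
  rw [e, h, smul_eq_mul]
  ring_nf

lemma disjS {k m c c' : ℕ} (hk : 0 < k) (hc1 : 1 ≤ c) (hc2 : c ≤ 2*k)
    (hc1' : 1 ≤ c') (hc2' : c' ≤ 2*k) (hne : c ≠ c') :
    Disjoint ((Finset.range m).image (fun a => 2*k*a+c))
      ((Finset.range m).image (fun a => 2*k*a+c')) := by
  rw [Finset.disjoint_left]
  intro x hx hx'
  rw [memS hk hc1 hc2] at hx
  rw [memS hk hc1' hc2'] at hx'
  omega

lemma imageA {k m j : ℕ} (hj1 : 1 ≤ j) (hjk : j ≤ k) :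
    (Finset.Icc 1 m).image (fun i => 2*k*m - (2*k*(i-1) + (j-1))) =
    (Finset.range m).image (fun a => 2*k*a + (2*k+1-j)) := by
  ext x
  simp only [Finset.mem_image, Finset.mem_Icc, Finset.mem_range]
  constructor
  · rintro ⟨i, ⟨hi1, him⟩, rfl⟩
    exact ⟨m - i, by omega, (keyA k m i j hi1 him hj1 hjk).symm⟩
  · rintro ⟨a, ha, rfl⟩
    refine ⟨m - a, ⟨by omega, by omega⟩, ?_⟩
    rw [keyA k m (m-a) j (by omega) (by omega) hj1 hjk, show m-(m-a) = a by omega]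

lemma imageB {k m j : ℕ} :
    (Finset.Icc 1 m).image (fun i => 2*k*m - 2*k*i + j) =
    (Finset.range m).image (fun a => 2*k*a + j) := by
  ext x
  simp only [Finset.mem_image, Finset.mem_Icc, Finset.mem_range]
  constructor
  · rintro ⟨i, ⟨hi1, him⟩, rfl⟩
    exact ⟨m - i, by omega, (keyB k m i j him).symm⟩
  · rintro ⟨a, ha, rfl⟩
    refine ⟨m - a, ⟨by omega, by omega⟩, ?_⟩
    rw [keyB k m (m-a) j (by omega), show m-(m-a) = a by omega]

theorem stmt_12 (n k : ℕ) (hn : 0 < n) (he : Even n) (hk : 0 < k) (hdvd : k ∣ n / 2)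
    (t : ℕ) (ht : t = n * (n + 1) / (2 * k))
    (T : ℕ → Finset ℕ)
    (hT : ∀ j, T j =
      (Finset.Icc 1 (n / (2 * k))).image (fun i => n - (2 * k * (i - 1) + (j - 1))) ∪
      (Finset.Icc 1 (n / (2 * k))).image (fun i => n - 2 * k * i + j)) :
    (∀ i j, 1 ≤ i → i ≤ k → 1 ≤ j → j ≤ k → i ≠ j → Disjoint (T i) (T j)) ∧
    (Finset.Icc 1 k).biUnion T = Finset.Icc 1 n ∧
    (∀ j, 1 ≤ j → j ≤ k → (T j).card = n / k) ∧
    (∀ j, 1 ≤ j → j ≤ k → ∑ x ∈ T j, x = t) := by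
  obtain ⟨w, hw⟩ := he
  obtain ⟨m, hm⟩ : ∃ m, n = 2*k*m := by
    obtain ⟨c, hc⟩ := hdvd
    refine ⟨c, ?_⟩
    rw [show 2*k*c = 2*(k*c) from by ring]
    omega
  subst hm
  have hk2 : 0 < 2*k := by omega
  have hm0 : 0 < m := by
    rcases Nat.eq_zero_or_pos m with rfl | hm0
    · simp at hn
    · exact hm0
  have hdiv : 2*k*m / (2*k) = m := Nat.mul_div_cancel_left _ hk2
  have hSj : ∀ j, 1 ≤ j → j ≤ k → T j =
      (Finset.range m).image (fun a => 2*k*a + (2*k+1-j)) ∪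
      (Finset.range m).image (fun a => 2*k*a + j) := by
    intro j hj1 hjk
    rw [hT j, hdiv, imageA hj1 hjk, imageB]
  refine ⟨?_, ?_, ?_, ?_⟩
  · intro i j hi1 hik hj1 hjk hne
    rw [hSj i hi1 hik, hSj j hj1 hjk]
    refine Finset.disjoint_union_left.mpr
      ⟨Finset.disjoint_union_right.mpr ⟨?_, ?_⟩,
       Finset.disjoint_union_right.mpr ⟨?_, ?_⟩⟩ <;>
      exact disjS hk (by omega) (by omega) (by omega) (by omega) (by omega)
  · ext x
    simp only [Finset.mem_biUnion, Finset.mem_Icc]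
    constructor
    · rintro ⟨j, ⟨hj1, hjk⟩, hx⟩
      rw [hSj j hj1 hjk, Finset.mem_union] at hx
      rcases hx with h | h
      · rw [memS hk (by omega) (by omega)] at h
        omega
      · rw [memS hk (by omega) (by omega)] at h
        omega
    · rintro ⟨h1, h2⟩
      have hdm := Nat.div_add_mod (x-1) (2*k)
      have hmod : (x-1) % (2*k) < 2*k := Nat.mod_lt _ hk2
      have hq : (x-1)/(2*k) < m := by
        rw [Nat.div_lt_iff_lt_mul hk2]
        have : 2*k*m = m*(2*k) := by ring
        omega
      set c := (x-1) % (2*k) + 1 with hc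
      by_cases hck : c ≤ k
      · refine ⟨c, ⟨by omega, hck⟩, ?_⟩
        rw [hSj c (by omega) hck, Finset.mem_union]
        right
        rw [memS hk (by omega) (by omega)]
        exact ⟨h1, h2, by omega⟩
      · refine ⟨2*k+1-c, ⟨by omega, by omega⟩, ?_⟩
        rw [hSj _ (by omega) (by omega : 2*k+1-c ≤ k), Finset.mem_union]
        left
        rw [memS hk (by omega) (by omega)]
        exact ⟨h1, h2, by omega⟩
  · intro j hj1 hjk
    rw [hSj j hj1 hjk,
      Finset.card_union_of_disjoint (disjS hk (by omega) (by omega) (by omega) (by omega) (by omega)),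
      cardS hk, cardS hk, show 2*k*m = k*(2*m) from by ring, Nat.mul_div_cancel_left _ hk]
    omega
  · intro j hj1 hjk
    rw [hSj j hj1 hjk,
      Finset.sum_union (disjS hk (by omega) (by omega) (by omega) (by omega) (by omega)),
      sumS hk, sumS hk, ht,
      show 2*k*m*(2*k*m+1) = 2*k*(m*(2*k*m+1)) from by ring,
      Nat.mul_div_cancel_left _ hk2]
    set c := 2*k+1-j with hc
    have hcj : c + j = 2*k+1 := by omega
    have hcjz : (c:ℤ) + j = 2*k+1 := by exact_mod_cast hcj
    zify [hm0]
    linear_combination (m:ℤ) * hcjz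
end

section
/- Let n ≥ 3 be odd and let k be a positive divisor of (n+1)/2, and set t = n(n+1)/(2k). Then there exist k pairwise disjoint subsets T_1, ..., T_k of {0, 1, ..., n} with union {0, 1, ..., n}, each having (n+1)/k elements and each summing to t; consequently {1,...,n} admits a (k,t)-partitioning. -/
theorem stmt_13 (n k : ℕ) (hn : 3 ≤ n) (ho : Odd n) (hk : 0 < k)
    (hdvd : k ∣ (n + 1) / 2) (t : ℕ) (ht : t = n * (n + 1) / (2 * k)) :
    (∃ T : Fin k → Finset ℕ,
      (∀ i j, i ≠ j → Disjoint (T i) (T j)) ∧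
      Finset.univ.biUnion T = Finset.Icc 0 n ∧
      (∀ i, (T i).card = (n + 1) / k) ∧
      (∀ i, ∑ x ∈ T i, x = t)) ∧
    (∃ S : Fin k → Finset ℕ,
      (∀ i j, i ≠ j → Disjoint (S i) (S j)) ∧
      Finset.univ.biUnion S = Finset.Icc 1 n ∧
      (∀ i, ∑ x ∈ S i, x = t)) := by
  obtain ⟨m, hm⟩ := hdvd
  have h2 : n + 1 = 2 * (k * m) := by
    rw [← hm]
    obtain ⟨r, hr⟩ := ho
    omega
  have hm0 : 0 < m := by
    rcases Nat.eq_zero_or_pos m with h | h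
    · subst h; simp at h2
    · exact h
  have htm : t = n * m := by
    have hx : n * (n + 1) = 2 * k * (n * m) := by rw [h2]; ring
    rw [ht, hx, Nat.mul_div_cancel_left _ (by positivity)]
  have hmono : ∀ a b : ℕ, a < b → a * m + m ≤ b * m := by
    intro a b h; nlinarith
  have hik : ∀ i : Fin k, (i : ℕ) * m + m ≤ k * m := fun i => hmono i.1 k i.2
  set A : Fin k → Finset ℕ := fun i => Finset.Ico ((i : ℕ) * m) ((i : ℕ) * m + m) with hA
  set T : Fin k → Finset ℕ := fun i => A i ∪ (A i).image (fun j => n - j) with hT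
  have hmem : ∀ (i : Fin k) (x : ℕ), x ∈ T i ↔
      ((i : ℕ) * m ≤ x ∧ x < (i : ℕ) * m + m) ∨
      (n + 1 ≤ x + ((i : ℕ) * m + m) ∧ x + (i : ℕ) * m ≤ n) := by
    intro i x
    have h3 := hik i
    simp only [hT, hA, Finset.mem_union, Finset.mem_Ico, Finset.mem_image]
    constructor
    · rintro (h | ⟨j, hj, rfl⟩)
      · left; exact h
      · right; omega
    · rintro (h | h)
      · left; exact h
      · right; exact ⟨n - x, by omega, by omega⟩
  -- disjointness
  have hdisj : ∀ i j : Fin k, i ≠ j → Disjoint (T i) (T j) := by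
    intro i j hij
    rw [Finset.disjoint_left]
    intro a hai haj
    rw [hmem] at hai haj
    have h3 := hik i
    have h4 := hik j
    have hij' : (i : ℕ) ≠ (j : ℕ) := fun h => hij (Fin.ext h)
    rcases Nat.lt_or_ge (i : ℕ) (j : ℕ) with h | h
    · have := hmono _ _ h; omega
    · have h' : (j : ℕ) < (i : ℕ) := by omega
      have := hmono _ _ h'; omega
  -- union
  have hU : Finset.univ.biUnion T = Finset.Icc 0 n := by
    ext x
    simp only [Finset.mem_biUnion, Finset.mem_univ, true_and, Finset.mem_Icc]
    constructor
    · rintro ⟨i, hi⟩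
      rw [hmem] at hi
      have h3 := hik i
      omega
    · intro hx
      rcases Nat.lt_or_ge x (k * m) with h | h
      · refine ⟨⟨x / m, ?_⟩, ?_⟩
        · exact (Nat.div_lt_iff_lt_mul hm0).2 h
        · rw [hmem]
          have h5 : x / m * m + x % m = x := Nat.div_add_mod' x m
          have h6 := Nat.mod_lt x hm0
          left; simp only []; omega
      · refine ⟨⟨(n - x) / m, ?_⟩, ?_⟩
        · exact (Nat.div_lt_iff_lt_mul hm0).2 (by omega)
        · rw [hmem]
          have h5 : (n - x) / m * m + (n - x) % m = n - x := Nat.div_add_mod' (n - x) m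
          have h6 := Nat.mod_lt (n - x) hm0
          right; simp only []; omega
  -- injectivity on A i of reflection
  have hinj : ∀ i : Fin k, Set.InjOn (fun j => n - j) (A i) := by
    intro i a ha b hb hab
    simp only [hA, Finset.coe_Ico, Set.mem_Ico] at ha hb
    have h3 := hik i
    simp only at hab
    omega
  have hABdisj : ∀ i : Fin k, Disjoint (A i) ((A i).image (fun j => n - j)) := by
    intro i
    rw [Finset.disjoint_left]
    intro a ha hb
    simp only [hA, Finset.mem_Ico, Finset.mem_image] at ha hb
    have h3 := hik i
    obtain ⟨j, hj, hj2⟩ := hb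
    omega
  -- cards
  have hcard : ∀ i : Fin k, (T i).card = (n + 1) / k := by
    intro i
    have hnk : (n + 1) / k = 2 * m := by
      rw [h2]
      rw [show 2 * (k * m) = k * (2 * m) by ring, Nat.mul_div_cancel_left _ hk]
    rw [hT, Finset.card_union_of_disjoint (hABdisj i),
      Finset.card_image_of_injOn (hinj i)]
    simp only [hA, Nat.card_Ico]
    omega
  -- sums
  have hsum : ∀ i : Fin k, ∑ x ∈ T i, x = t := by
    intro i
    have h3 := hik i
    rw [hT]
    rw [Finset.sum_union (hABdisj i), Finset.sum_image (hinj i)]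
    have : (∑ x ∈ A i, x) + (∑ j ∈ A i, (n - j)) = ∑ j ∈ A i, n := by
      rw [← Finset.sum_add_distrib]
      apply Finset.sum_congr rfl
      intro x hx
      simp only [hA, Finset.mem_Ico] at hx
      omega
    rw [this, Finset.sum_const]
    simp only [hA, Nat.card_Ico, smul_eq_mul, Nat.add_sub_cancel_left]
    rw [htm, Nat.mul_comm]
  refine ⟨⟨T, hdisj, hU, hcard, hsum⟩, ⟨fun i => (T i).erase 0, ?_, ?_, ?_⟩⟩
  · intro i j hij
    exact Finset.disjoint_of_subset_left (Finset.erase_subset _ _)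
      (Finset.disjoint_of_subset_right (Finset.erase_subset _ _) (hdisj i j hij))
  · ext x
    simp only [Finset.mem_biUnion, Finset.mem_univ, true_and, Finset.mem_erase,
      Finset.mem_Icc]
    have hx : (∃ i, x ∈ T i) ↔ x ≤ n := by
      have := Finset.ext_iff.1 hU x
      simpa using this
    constructor
    · rintro ⟨i, hx0, hxi⟩
      exact ⟨by omega, hx.1 ⟨i, hxi⟩⟩
    · rintro ⟨h1, h2'⟩
      obtain ⟨i, hi⟩ := hx.2 h2'
      exact ⟨i, by omega, hi⟩
  · intro i
    calc ∑ x ∈ ((T i).erase 0), x = ∑ x ∈ T i, x := Finset.sum_erase _ rfl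
      _ = t := hsum i
end

section
/- For every positive integer n and every divisor k of Δ_n = n(n+1)/2 with t := Δ_n / k ≥ n, there exists a partition of the set {1, 2, ..., n} into k pairwise disjoint subsets each of whose elements sum to t. -/
private lemma part_mem {k m : ℕ} {T : Fin k → Finset ℕ}
    (h : Finset.univ.biUnion T = Finset.Icc 1 m) {i : Fin k} {x : ℕ} (hx : x ∈ T i) :
    1 ≤ x ∧ x ≤ m := by
  have : x ∈ Finset.Icc 1 m := by
    rw [← h]; exact Finset.mem_biUnion.mpr ⟨i, Finset.mem_univ i, hx⟩
  simpa [Finset.mem_Icc] using this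

set_option maxHeartbeats 4000000 in
private lemma aux : ∀ n k t : ℕ, 2 * (k * t) = n * (n + 1) → n ≤ t →
    ∃ T : Fin k → Finset ℕ,
      (∀ i j, i ≠ j → Disjoint (T i) (T j)) ∧
      Finset.univ.biUnion T = Finset.Icc 1 n ∧
      (∀ i, ∑ x ∈ T i, x = t) := by
  intro n
  induction n using Nat.strong_induction_on with
  | _ n ih =>
    intro k t hkt hnt
    rcases Nat.eq_zero_or_pos n with hn0 | hn
    · subst hn0
      refine ⟨fun _ => ∅, by simp, by ext x; simp, ?_⟩
      intro i
      have hk : k ≠ 0 := fun h => by subst h; exact i.elim0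
      have : k * t = 0 := by omega
      rcases Nat.mul_eq_zero.mp this with h | h
      · exact absurd h hk
      · simp [h]
    have hk : 0 < k := by
      rcases Nat.eq_zero_or_pos k with h | h
      · exfalso; subst h; simp at hkt; nlinarith
      · exact h
    rcases eq_or_lt_of_le hnt with htn | htn
    · -- case A : t = n
      subst htn
      have h2k : 2 * k = n + 1 := by
        have h : (2 * k) * n = (n + 1) * n := by
          rw [mul_assoc]; rw [hkt]; ring
        exact Nat.eq_of_mul_eq_mul_right hn h
      refine ⟨fun i => if (i : ℕ) + 1 = k then {n} else {(i : ℕ) + 1, n - 1 - (i : ℕ)}, ?_, ?_, ?_⟩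
      · intro i j hij
        have hij' : (i : ℕ) ≠ (j : ℕ) := fun h => hij (Fin.ext h)
        have hi := i.isLt; have hj := j.isLt
        rw [Finset.disjoint_left]
        intro x hx hx'
        dsimp only at hx hx'
        split_ifs at hx hx' <;>
          simp only [Finset.mem_insert, Finset.mem_singleton] at hx hx' <;> omega
      · ext x
        simp only [Finset.mem_biUnion, Finset.mem_univ, true_and, Finset.mem_Icc]
        constructor
        · rintro ⟨i, hx⟩
          have hi := i.isLt
          split_ifs at hx <;>
            simp only [Finset.mem_insert, Finset.mem_singleton] at hx <;> omega
        · intro hx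
          by_cases hxk : x ≤ k - 1
          · refine ⟨⟨x - 1, by omega⟩, ?_⟩
            rw [if_neg (by simp only [Fin.val_mk]; omega)]
            simp only [Fin.val_mk, Finset.mem_insert, Finset.mem_singleton]; omega
          · by_cases hxn : x = n
            · refine ⟨⟨k - 1, by omega⟩, ?_⟩
              rw [if_pos (by simp only [Fin.val_mk]; omega)]
              simp only [Finset.mem_singleton]; omega
            · refine ⟨⟨n - 1 - x, by omega⟩, ?_⟩
              rw [if_neg (by simp only [Fin.val_mk]; omega)]
              simp only [Fin.val_mk, Finset.mem_insert, Finset.mem_singleton]; omega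
      · intro i
        have hi := i.isLt
        dsimp only
        split_ifs with h1
        · simp
        · rw [Finset.sum_pair (by omega)]
          omega
    by_cases htD : 2 * n ≤ t
    · -- case D : t ≥ 2n
      have hktz : 2 * ((k : ℤ) * t) = n * (n + 1) := by exact_mod_cast hkt
      have h4k : 4 * k ≤ n + 1 := by
        have h1 : (4 * k) * n ≤ (n + 1) * n := by
          calc (4 * k) * n = 2 * k * (2 * n) := by ring
            _ ≤ 2 * k * t := Nat.mul_le_mul_left _ htD
            _ = 2 * (k * t) := by ring
            _ = n * (n + 1) := hkt
            _ = (n + 1) * n := by ring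
        exact Nat.le_of_mul_le_mul_right h1 hn
      have h2kn : 2 * k ≤ n := by omega
      have key : 3 * n + 1 ≤ t + 4 * k := by
        have h1 : (0:ℤ) ≤ (t:ℤ) - 2 * n := by push_cast; omega
        have h2 : (0:ℤ) ≤ (t:ℤ) - (n + 1) := by push_cast; omega
        have h3 : (0:ℤ) < t := by push_cast; omega
        have h4 := mul_nonneg h1 h2
        zify
        nlinarith [h4, hktz, h3]
      set p := n - 2 * k with hp
      set t' := t - (2 * n - 2 * k + 1) with ht'
      have hrec : 2 * (k * t') = p * (p + 1) := by
        zify [h2kn, show 2 * k ≤ 2 * n by omega, show 2 * n - 2 * k + 1 ≤ t by omega, hp, ht']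
        linear_combination hktz
      have ht'p : p ≤ t' := by omega
      obtain ⟨T', hd', hu', hs'⟩ := ih p (by omega) k t' hrec ht'p
      refine ⟨fun i => {n - (i:ℕ), n - 2*k + 1 + (i:ℕ)} ∪ T' i, ?_, ?_, ?_⟩
      · intro i j hij
        have hij' : (i:ℕ) ≠ (j:ℕ) := fun h => hij (Fin.ext h)
        have hi := i.isLt; have hj := j.isLt
        rw [Finset.disjoint_left]
        intro x hx hx'
        rcases Finset.mem_union.mp hx with hx1 | hx1 <;>
          rcases Finset.mem_union.mp hx' with hx2 | hx2
        · simp only [Finset.mem_insert, Finset.mem_singleton] at hx1 hx2; omega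
        · have hb := part_mem hu' hx2
          simp only [Finset.mem_insert, Finset.mem_singleton] at hx1; omega
        · have hb := part_mem hu' hx1
          simp only [Finset.mem_insert, Finset.mem_singleton] at hx2; omega
        · exact Finset.disjoint_left.mp (hd' i j hij) hx1 hx2
      · ext x
        simp only [Finset.mem_biUnion, Finset.mem_univ, true_and, Finset.mem_Icc]
        constructor
        · rintro ⟨i, hx⟩
          have hi := i.isLt
          rcases Finset.mem_union.mp hx with hx1 | hx1
          · simp only [Finset.mem_insert, Finset.mem_singleton] at hx1; omega
          · have := part_mem hu' hx1; omega
        · intro hx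
          by_cases hxp : x ≤ p
          · have hmem : x ∈ Finset.Icc 1 p := Finset.mem_Icc.mpr ⟨hx.1, hxp⟩
            rw [← hu'] at hmem
            obtain ⟨i, -, hxi⟩ := Finset.mem_biUnion.mp hmem
            exact ⟨i, Finset.mem_union_right _ hxi⟩
          · by_cases hxm : n - k + 1 ≤ x
            · refine ⟨⟨n - x, by omega⟩, Finset.mem_union_left _ ?_⟩
              simp only [Finset.mem_insert, Finset.mem_singleton, Fin.val_mk]; omega
            · refine ⟨⟨x - (n - 2*k + 1), by omega⟩, Finset.mem_union_left _ ?_⟩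
              simp only [Finset.mem_insert, Finset.mem_singleton, Fin.val_mk]; omega
      · intro i
        have hi := i.isLt
        dsimp only
        have hdis : Disjoint ({n - (i:ℕ), n - 2*k + 1 + (i:ℕ)} : Finset ℕ) (T' i) := by
          rw [Finset.disjoint_left]; intro x hx hx'
          have := part_mem hu' hx'
          simp only [Finset.mem_insert, Finset.mem_singleton] at hx; omega
        rw [Finset.sum_union hdis, Finset.sum_pair (by omega), hs' i]
        omega
    rcases Nat.even_or_odd t with hev | hodd
    · -- case C : even t, n < t < 2n
      obtain ⟨e, he⟩ := hev
      have he2 : t = 2 * e := by omega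
      have htn2 : n + 2 ≤ t := by
        by_contra hcon
        have h : t = n + 1 := by omega
        subst h
        have h2k : 2 * k = n :=
          Nat.eq_of_mul_eq_mul_right (by omega) ((mul_assoc 2 k (n+1)).trans hkt)
        omega
      have htD' : t < 2 * n := by omega
      have hen : e ≤ n - 1 := by omega
      set s := n - e with hs
      set m := t - n - 1 with hm
      have hme : m + 2 ≤ e := by omega
      have hktz : 2 * ((k : ℤ) * t) = n * (n + 1) := by exact_mod_cast hkt
      have hez : (t : ℤ) = 2 * e := by exact_mod_cast he2
      have hid : 2 * (s * t) + 2 * e + m * (m + 1) = n * (n + 1) := by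
        zify [show e ≤ n by omega, show n ≤ t by omega, show 1 ≤ t - n by omega, hs, hm]
        linear_combination ((t : ℤ) - 1) * hez
      have hidz : 2 * ((s:ℤ) * t) + 2 * e + m * (m + 1) = n * (n + 1) := by exact_mod_cast hid
      have h1 : 2 * (s * t) + 2 * e ≤ 2 * (k * t) := by
        rw [hkt]; linarith [Nat.zero_le (m * (m + 1))]
      have hst : s * t < k * t := by linarith [h1, show 1 ≤ e by omega]
      have hsk : s < k := lt_of_mul_lt_mul_right hst (Nat.zero_le t)
      set j := 2 * (k - s) - 1 with hj
      have hj1 : 1 ≤ j := by omega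
      have hrecC : 2 * (j * e) = m * (m + 1) := by
        zify [show s ≤ k from hsk.le, show 1 ≤ 2 * (k - s) by omega, hj]
        linear_combination (hktz - hidz) + (2*(s:ℤ) - 2*k) * hez
      obtain ⟨Q, hdQ, huQ, hsQ⟩ := ih m (by omega) j e hrecC (by omega)
      refine ⟨fun i =>
        if h : (i:ℕ) < s then {m + 1 + (i:ℕ), n - (i:ℕ)}
        else if h2 : (i:ℕ) = s then insert e (Q ⟨j - 1, by omega⟩)
        else Q ⟨2 * ((i:ℕ) - s - 1), by have := i.isLt; omega⟩ ∪
             Q ⟨2 * ((i:ℕ) - s - 1) + 1, by have := i.isLt; omega⟩, ?_, ?_, ?_⟩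
      · intro i1 i2 hij
        have hij' : (i1:ℕ) ≠ (i2:ℕ) := fun h => hij (Fin.ext h)
        have hi1 := i1.isLt; have hi2 := i2.isLt
        rw [Finset.disjoint_left]
        intro x hx hx'
        dsimp only at hx hx'
        split_ifs at hx hx' with ha1 ha2 ha2 ha2 ha3 ha3 ha4 ha4
        -- pair / pair
        · simp only [Finset.mem_insert, Finset.mem_singleton] at hx hx'; omega
        -- pair / insert
        · simp only [Finset.mem_insert, Finset.mem_singleton] at hx
          rcases Finset.mem_insert.mp hx' with h' | h'
          · omega
          · have hb := part_mem huQ h'; omega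
        -- pair / union
        · simp only [Finset.mem_insert, Finset.mem_singleton] at hx
          rcases Finset.mem_union.mp hx' with h' | h' <;>
            · have hb := part_mem huQ h'; omega
        -- insert / pair
        · simp only [Finset.mem_insert, Finset.mem_singleton] at hx'
          rcases Finset.mem_insert.mp hx with h' | h'
          · omega
          · have hb := part_mem huQ h'; omega
        -- insert / insert
        · omega
        -- insert / union
        · rcases Finset.mem_insert.mp hx with h' | h'
          · rcases Finset.mem_union.mp hx' with h'' | h'' <;>
              · have hb := part_mem huQ h''; omega
          · rcases Finset.mem_union.mp hx' with h'' | h'' <;>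
              exact Finset.disjoint_left.mp
                (hdQ _ _ (by simp only [ne_eq, Fin.mk.injEq]; omega)) h' h''
        -- union / pair
        · simp only [Finset.mem_insert, Finset.mem_singleton] at hx'
          rcases Finset.mem_union.mp hx with h' | h' <;>
            · have hb := part_mem huQ h'; omega
        -- union / insert
        · rcases Finset.mem_insert.mp hx' with h' | h'
          · rcases Finset.mem_union.mp hx with h'' | h'' <;>
              · have hb := part_mem huQ h''; omega
          · rcases Finset.mem_union.mp hx with h'' | h'' <;>
              exact Finset.disjoint_left.mp
                (hdQ _ _ (by simp only [ne_eq, Fin.mk.injEq]; omega)) h'' h'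
        -- union / union
        · rcases Finset.mem_union.mp hx with h' | h' <;>
            rcases Finset.mem_union.mp hx' with h'' | h'' <;>
            exact Finset.disjoint_left.mp
              (hdQ _ _ (by simp only [ne_eq, Fin.mk.injEq]; omega)) h' h''
      · ext x
        simp only [Finset.mem_biUnion, Finset.mem_univ, true_and, Finset.mem_Icc]
        constructor
        · rintro ⟨i, hx⟩
          have hi := i.isLt
          split_ifs at hx with ha1 ha2
          · simp only [Finset.mem_insert, Finset.mem_singleton] at hx; omega
          · rcases Finset.mem_insert.mp hx with h' | h'
            · omega
            · have hb := part_mem huQ h'; omega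
          · rcases Finset.mem_union.mp hx with h' | h' <;>
              · have hb := part_mem huQ h'; omega
        · intro hx
          by_cases hxm : x ≤ m
          · have hmem : x ∈ Finset.Icc 1 m := Finset.mem_Icc.mpr ⟨hx.1, hxm⟩
            rw [← huQ] at hmem
            obtain ⟨i', -, hxi⟩ := Finset.mem_biUnion.mp hmem
            have hi' := i'.isLt
            by_cases hlast : (i':ℕ) = j - 1
            · refine ⟨⟨s, by omega⟩, ?_⟩
              rw [dif_neg (by simp only [Fin.val_mk]; omega),
                  dif_pos (by simp only [Fin.val_mk])]
              refine Finset.mem_insert_of_mem ?_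
              have : (⟨j - 1, by omega⟩ : Fin j) = i' := Fin.ext (by simp only [Fin.val_mk]; omega)
              rw [this]; exact hxi
            · set r := (i':ℕ) / 2 with hr
              refine ⟨⟨s + 1 + r, by omega⟩, ?_⟩
              rw [dif_neg (by simp only [Fin.val_mk]; omega),
                  dif_neg (by simp only [Fin.val_mk]; omega)]
              by_cases hpar : (i':ℕ) % 2 = 0
              · refine Finset.mem_union_left _ ?_
                have : (⟨2 * ((↑(⟨s + 1 + r, by omega⟩ : Fin k)) - s - 1), by
                    have := (⟨s + 1 + r, by omega⟩ : Fin k).isLt; omega⟩ : Fin j) = i' :=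
                  Fin.ext (by simp only [Fin.val_mk]; omega)
                rw [this]; exact hxi
              · refine Finset.mem_union_right _ ?_
                have : (⟨2 * ((↑(⟨s + 1 + r, by omega⟩ : Fin k)) - s - 1) + 1, by
                    have := (⟨s + 1 + r, by omega⟩ : Fin k).isLt; omega⟩ : Fin j) = i' :=
                  Fin.ext (by simp only [Fin.val_mk]; omega)
                rw [this]; exact hxi
          · by_cases hxe : x = e
            · refine ⟨⟨s, by omega⟩, ?_⟩
              rw [dif_neg (by simp only [Fin.val_mk]; omega),
                  dif_pos (by simp only [Fin.val_mk])]
              exact Finset.mem_insert.mpr (Or.inl hxe)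
            · by_cases hxa : x ≤ e - 1
              · refine ⟨⟨x - (m+1), by omega⟩, ?_⟩
                rw [dif_pos (by simp only [Fin.val_mk]; omega)]
                simp only [Fin.val_mk, Finset.mem_insert, Finset.mem_singleton]; omega
              · refine ⟨⟨n - x, by omega⟩, ?_⟩
                rw [dif_pos (by simp only [Fin.val_mk]; omega)]
                simp only [Fin.val_mk, Finset.mem_insert, Finset.mem_singleton]; omega
      · intro i
        have hi := i.isLt
        dsimp only
        split_ifs with ha1 ha2
        · rw [Finset.sum_pair (by omega)]; omega
        · rw [Finset.sum_insert (fun hc => by have := part_mem huQ hc; omega), hsQ]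
          omega
        · rw [Finset.sum_union (hdQ _ _ (by simp only [ne_eq, Fin.mk.injEq]; omega)),
              hsQ, hsQ]
          omega
    · -- case B : odd t, n < t < 2n
      obtain ⟨a, ha⟩ := hodd
      have htD' : t < 2 * n := by omega
      set s := n - a with hs
      set m := t - n - 1 with hm
      have hktz : 2 * ((k : ℤ) * t) = n * (n + 1) := by exact_mod_cast hkt
      have hid : 2 * (s * t) + m * (m + 1) = n * (n + 1) := by
        have haz : (t : ℤ) = 2 * a + 1 := by exact_mod_cast ha
        zify [show a ≤ n by omega, show n ≤ t by omega, show 1 ≤ t - n by omega, hs, hm]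
        linear_combination (t : ℤ) * haz
      have h1 : 2 * (s * t) ≤ 2 * (k * t) := by
        rw [hkt]; linarith [Nat.zero_le (m * (m + 1))]
      have hst : s * t ≤ k * t := Nat.le_of_mul_le_mul_left h1 (by omega)
      have hsk : s ≤ k := Nat.le_of_mul_le_mul_right hst (by omega)
      have hrec : 2 * ((k - s) * t) = m * (m + 1) := by
        have hidz : 2 * ((s:ℤ) * t) + m * (m + 1) = n * (n + 1) := by exact_mod_cast hid
        zify [hsk]
        linear_combination hktz - hidz
      obtain ⟨T', hd', hu', hs'⟩ := ih m (by omega) (k - s) t hrec (by omega)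
      refine ⟨fun i => if h : (i:ℕ) < s then {m + 1 + (i:ℕ), n - (i:ℕ)}
        else T' ⟨(i:ℕ) - s, by have := i.isLt; omega⟩, ?_, ?_, ?_⟩
      · intro i j hij
        have hij' : (i:ℕ) ≠ (j:ℕ) := fun h => hij (Fin.ext h)
        have hi := i.isLt; have hj := j.isLt
        rw [Finset.disjoint_left]
        intro x hx hx'
        dsimp only at hx hx'
        split_ifs at hx hx' with h1' h2' h2'
        · simp only [Finset.mem_insert, Finset.mem_singleton] at hx hx'; omega
        · have hb := part_mem hu' hx'
          simp only [Finset.mem_insert, Finset.mem_singleton] at hx; omega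
        · have hb := part_mem hu' hx
          simp only [Finset.mem_insert, Finset.mem_singleton] at hx'; omega
        · refine Finset.disjoint_left.mp (hd' _ _ ?_) hx hx'
          simp only [ne_eq, Fin.mk.injEq]
          omega
      · ext x
        simp only [Finset.mem_biUnion, Finset.mem_univ, true_and, Finset.mem_Icc]
        constructor
        · rintro ⟨i, hx⟩
          have hi := i.isLt
          split_ifs at hx with h1'
          · simp only [Finset.mem_insert, Finset.mem_singleton] at hx; omega
          · have := part_mem hu' hx; omega
        · intro hx
          by_cases hxm : x ≤ m
          · have hmem : x ∈ Finset.Icc 1 m := Finset.mem_Icc.mpr ⟨hx.1, hxm⟩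
            rw [← hu'] at hmem
            obtain ⟨i', -, hxi⟩ := Finset.mem_biUnion.mp hmem
            have hi' := i'.isLt
            refine ⟨⟨s + (i':ℕ), by omega⟩, ?_⟩
            rw [dif_neg (by simp only [Fin.val_mk]; omega)]
            simp only [Fin.val_mk, show s + (i':ℕ) - s = (i':ℕ) from by omega, Fin.eta]
            exact hxi
          · by_cases hxa : x ≤ a
            · refine ⟨⟨x - (m+1), by omega⟩, ?_⟩
              rw [dif_pos (by simp only [Fin.val_mk]; omega)]
              simp only [Fin.val_mk, Finset.mem_insert, Finset.mem_singleton]; omega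
            · refine ⟨⟨n - x, by omega⟩, ?_⟩
              rw [dif_pos (by simp only [Fin.val_mk]; omega)]
              simp only [Fin.val_mk, Finset.mem_insert, Finset.mem_singleton]; omega
      · intro i
        have hi := i.isLt
        dsimp only
        split_ifs with h1'
        · rw [Finset.sum_pair (by omega)]; omega
        · exact hs' _

theorem stmt_17 (n k : ℕ) (hn : 0 < n) (hk : 0 < k)
    (hdvd : k ∣ n * (n + 1) / 2) (ht : n ≤ n * (n + 1) / 2 / k) :
    ∃ T : Fin k → Finset ℕ,
      (∀ i j, i ≠ j → Disjoint (T i) (T j)) ∧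
      Finset.univ.biUnion T = Finset.Icc 1 n ∧
      (∀ i, ∑ x ∈ T i, x = n * (n + 1) / 2 / k) := by
  have h2 : 2 ∣ n * (n + 1) := (Nat.even_mul_succ_self n).two_dvd
  have h1 : k * (n * (n + 1) / 2 / k) = n * (n + 1) / 2 := Nat.mul_div_cancel' hdvd
  have : 2 * (k * (n * (n + 1) / 2 / k)) = n * (n + 1) := by
    rw [h1, Nat.mul_div_cancel' h2]
  exact aux n k _ this ht
end
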